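/- Let λ, ε, k0, k3 ∈ ℝ, σ ∈ {+1,−1}, and let A : ℝ⁴ → ℝ⁴ be the plane-wave ansatz. With the κ-Minkowski structure constants, the κ-Minkowski matrices γ, ρ, the Lie-Poisson bracket, and the field strength F, one has for every x ∈ ℝ⁴ (with φ = φ(x) = k0 x^0 − k3 x^3): F_{01}(x) = ε k0 cos φ, F_{02}(x) = σ ε k0 sin φ, F_{03}(x) = 0, F_{32}(x) = −σ ε k3 sin φ, F_{13}(x) = ε k3 cos φ, F_{21}(x) = σ λ ε² k0. Moreover, if the deformed dispersion relation (1 − λ²ε²) k0² − k3² = 0 holds, then at every x the squared norms of the deformed magnetic field (F_{32}, F_{13}, F_{21}) and of the deformed electric field (F_{01}, F_{02}, F_{03}) are both equal to ε² k0². -/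

import Mathlib

set_option autoImplicit false

open scoped BigOperators

/-- Partial derivative `∂_a u (x)` of `u : ℝ⁴ → ℝ`. -/
noncomputable def pd (a : Fin 4) (u : (Fin 4 → ℝ) → ℝ) (x : Fin 4 → ℝ) : ℝ :=
  fderiv ℝ u x (Pi.single a 1)

/-- Lie-Poisson bracket `{u,v}(x) = Σ_{a,b,c} f^{ab}_c x^c ∂_a u ∂_b v`. -/
noncomputable def pb (f : Fin 4 → Fin 4 → Fin 4 → ℝ)
    (u v : (Fin 4 → ℝ) → ℝ) (x : Fin 4 → ℝ) : ℝ :=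
  ∑ a, ∑ b, ∑ c, f a b c * x c * pd a u x * pd b v x

/-- Covariant derivative `(D_a ψ)(x) = Σ_m ρ^m_a(A(x)) (Σ_l γ^l_m(A(x)) ∂_l ψ(x) + {A_m, ψ}(x))`. -/
noncomputable def Dcov (f : Fin 4 → Fin 4 → Fin 4 → ℝ)
    (γ ρ : (Fin 4 → ℝ) → Matrix (Fin 4) (Fin 4) ℝ)
    (A : (Fin 4 → ℝ) → Fin 4 → ℝ) (a : Fin 4)
    (ψ : (Fin 4 → ℝ) → ℝ) (x : Fin 4 → ℝ) : ℝ :=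
  ∑ m, ρ (A x) m a * ((∑ l, γ (A x) l m * pd l ψ x) + pb f (fun y => A y m) ψ x)

/-- The Minkowski metric `η = diag(1,−1,−1,−1)`. -/
noncomputable def ηm : Matrix (Fin 4) (Fin 4) ℝ := Matrix.diagonal ![1, -1, -1, -1]

/-- Indices raised with `η`: `F^{ab}(x) = Σ_{c,e} η^{ac} η^{be} F_{ce}(x)`. -/
noncomputable def Fup (F : (Fin 4 → ℝ) → Matrix (Fin 4) (Fin 4) ℝ)
    (a b : Fin 4) (x : Fin 4 → ℝ) : ℝ :=
  ∑ c, ∑ e, ηm a c * ηm b e * F x c e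

/-- The covariant equations-of-motion expression `E_C^a(x)`. -/
noncomputable def EC (f : Fin 4 → Fin 4 → Fin 4 → ℝ)
    (γ ρ : (Fin 4 → ℝ) → Matrix (Fin 4) (Fin 4) ℝ)
    (A : (Fin 4 → ℝ) → Fin 4 → ℝ)
    (F : (Fin 4 → ℝ) → Matrix (Fin 4) (Fin 4) ℝ)
    (a : Fin 4) (x : Fin 4 → ℝ) : ℝ :=
  (∑ c, Dcov f γ ρ A c (fun y => Fup F c a y) x)
  + (1/2) * (∑ d, ∑ e, ∑ b, F x d e * f d e b * Fup F a b x)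
  - ∑ d, ∑ e, ∑ b, F x d e * f a e b * Fup F d b x

/-- κ-Minkowski structure constants `f^{ab}_c = λ(δ^a_0 δ^b_c − δ^b_0 δ^a_c)`. -/
def fκ (lam : ℝ) (a b c : Fin 4) : ℝ :=
  lam * ((if a = 0 then 1 else 0) * (if b = c then 1 else 0)
       - (if b = 0 then 1 else 0) * (if a = c then 1 else 0))

/-- The κ-Minkowski matrix `γ(A)`: `γ^0_0 = 1`, `γ^0_c = −λ A_c` (c = 1,2,3),
`γ^l_c = δ^l_c` for `l = 1,2,3` (upper index = row). -/
def γκ (lam : ℝ) (A : Fin 4 → ℝ) : Matrix (Fin 4) (Fin 4) ℝ :=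
  fun l c => if l = 0 then (if c = 0 then 1 else -lam * A c)
             else (if l = c then 1 else 0)

/-- The κ-Minkowski matrix `ρ(A) = diag(1, e^{λA_0}, e^{λA_0}, e^{λA_0})`. -/
noncomputable def ρκ (lam : ℝ) (A : Fin 4 → ℝ) : Matrix (Fin 4) (Fin 4) ℝ :=
  fun m a => if m = a then (if m = 0 then 1 else Real.exp (lam * A 0)) else 0

/-- The phase `φ(x) = k0 x^0 − k3 x^3` of the plane wave. -/
def φpw (k0 k3 : ℝ) (x : Fin 4 → ℝ) : ℝ := k0 * x 0 - k3 * x 3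

/-- The plane-wave ansatz `A_0 = 0`, `A_1 = ε sin φ`, `A_2 = −σ ε cos φ`, `A_3 = 0`. -/
noncomputable def Apw (ε σ k0 k3 : ℝ) (x : Fin 4 → ℝ) : Fin 4 → ℝ :=
  ![0, ε * Real.sin (φpw k0 k3 x), -σ * ε * Real.cos (φpw k0 k3 x), 0]

/-- Field strength `F_{ab}(x)` of a gauge field `A` (as a matrix-valued function). -/
noncomputable def Fstr (f : Fin 4 → Fin 4 → Fin 4 → ℝ)
    (γ ρ : (Fin 4 → ℝ) → Matrix (Fin 4) (Fin 4) ℝ)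
    (A : (Fin 4 → ℝ) → Fin 4 → ℝ) (x : Fin 4 → ℝ) : Matrix (Fin 4) (Fin 4) ℝ :=
  fun a b => ∑ c, ∑ e, ρ (A x) c a * ρ (A x) e b *
    ((∑ l, γ (A x) l c * pd l (fun y => A y e) x)
      - (∑ l, γ (A x) l e * pd l (fun y => A y c) x)
      + pb f (fun y => A y c) (fun y => A y e) x)

/-- Field strength of the κ-Minkowski plane wave. -/
noncomputable def Fpw (lam ε σ k0 k3 : ℝ) : (Fin 4 → ℝ) → Matrix (Fin 4) (Fin 4) ℝ :=
  fun x => Fstr (fκ lam) (γκ lam) (ρκ lam) (Apw ε σ k0 k3) x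

/-- The generalized equations-of-motion expression `E_G^a(x)` with parameter `α`,
for the κ-Minkowski plane wave. -/
noncomputable def EGpw (α lam ε σ k0 k3 : ℝ) (a : Fin 4) (x : Fin 4 → ℝ) : ℝ :=
  EC (fκ lam) (γκ lam) (ρκ lam) (Apw ε σ k0 k3) (Fpw lam ε σ k0 k3) a x
    + α * ((∑ b, ∑ e, ∑ d, fκ lam b a b * Fpw lam ε σ k0 k3 x e d
              * Fup (Fpw lam ε σ k0 k3) e d x)
         + 4 * ∑ b, ∑ e, ∑ d, fκ lam b e b * Fpw lam ε σ k0 k3 x e d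
              * Fup (Fpw lam ε σ k0 k3) d a x)

noncomputable def Lφ (k0 k3 : ℝ) : (Fin 4 → ℝ) →L[ℝ] ℝ :=
  k0 • ContinuousLinearMap.proj 0 - k3 • ContinuousLinearMap.proj 3

lemma φpw_eq (k0 k3 : ℝ) : φpw k0 k3 = ⇑(Lφ k0 k3) := by
  funext y; simp [φpw, Lφ]

lemma hasFDerivAt_φpw (k0 k3 : ℝ) (x : Fin 4 → ℝ) :
    HasFDerivAt (φpw k0 k3) (Lφ k0 k3) x := by
  rw [φpw_eq]; exact (Lφ k0 k3).hasFDerivAt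

lemma Lφ_single (k0 k3 : ℝ) (a : Fin 4) :
    Lφ k0 k3 (Pi.single a 1) = ![k0, 0, 0, -k3] a := by
  fin_cases a <;> simp [Lφ, Pi.single_apply]

lemma pd_Apw (ε σ k0 k3 : ℝ) (a e : Fin 4) (x : Fin 4 → ℝ) :
    pd a (fun y => Apw ε σ k0 k3 y e) x
      = ![0, ε * Real.cos (φpw k0 k3 x), σ * ε * Real.sin (φpw k0 k3 x), 0] e
        * ![k0, 0, 0, -k3] a := by
  fin_cases e
  · simp [pd, Apw]
  · have h : HasFDerivAt (fun y => Apw ε σ k0 k3 y 1)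
        ((ε * Real.cos (φpw k0 k3 x)) • Lφ k0 k3) x := by
      have h1 := ((Real.hasDerivAt_sin (φpw k0 k3 x)).comp_hasFDerivAt x
        (hasFDerivAt_φpw k0 k3 x)).const_mul ε
      simpa [Apw, smul_smul] using h1
    simp [pd, h.fderiv, Lφ_single]
  · have h : HasFDerivAt (fun y => Apw ε σ k0 k3 y 2)
        ((σ * ε * Real.sin (φpw k0 k3 x)) • Lφ k0 k3) x := by
      have h1 := ((Real.hasDerivAt_cos (φpw k0 k3 x)).comp_hasFDerivAt x
        (hasFDerivAt_φpw k0 k3 x)).const_mul (-σ * ε)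
      have : (-σ * ε) • (-Real.sin (φpw k0 k3 x) • Lφ k0 k3)
          = (σ * ε * Real.sin (φpw k0 k3 x)) • Lφ k0 k3 := by
        rw [smul_smul]; ring_nf
      rw [this] at h1
      simpa [Apw] using h1
    simp [pd, h.fderiv, Lφ_single]
  · simp [pd, Apw]

lemma pd_zero' (a : Fin 4) (x : Fin 4 → ℝ) : pd a (fun _ => (0:ℝ)) x = 0 := by
  simp [pd]

lemma pd_sin' (ε k0 k3 : ℝ) (a : Fin 4) (x : Fin 4 → ℝ) :
    pd a (fun y => ε * Real.sin (φpw k0 k3 y)) x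
      = ε * Real.cos (φpw k0 k3 x) * ![k0, 0, 0, -k3] a := by
  have h := pd_Apw ε 1 k0 k3 a 1 x
  simp only [Apw, Matrix.cons_val_one, Matrix.head_cons, Matrix.cons_val_zero] at h
  rw [h]

lemma pd_cos' (ε σ k0 k3 : ℝ) (a : Fin 4) (x : Fin 4 → ℝ) :
    pd a (fun y => -(σ * ε * Real.cos (φpw k0 k3 y))) x
      = σ * ε * Real.sin (φpw k0 k3 x) * ![k0, 0, 0, -k3] a := by
  have h := pd_Apw ε σ k0 k3 a 2 x
  simp only [Apw, Matrix.cons_val_two, Matrix.head_cons, Matrix.tail_cons, neg_mul] at h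
  rw [h]

theorem stmt6 (lam ε k0 k3 σ : ℝ) (hσ : σ = 1 ∨ σ = -1) :
    ∀ x : Fin 4 → ℝ,
      (Fpw lam ε σ k0 k3 x 0 1 = ε * k0 * Real.cos (φpw k0 k3 x)
        ∧ Fpw lam ε σ k0 k3 x 0 2 = σ * ε * k0 * Real.sin (φpw k0 k3 x)
        ∧ Fpw lam ε σ k0 k3 x 0 3 = 0
        ∧ Fpw lam ε σ k0 k3 x 3 2 = -σ * ε * k3 * Real.sin (φpw k0 k3 x)
        ∧ Fpw lam ε σ k0 k3 x 1 3 = ε * k3 * Real.cos (φpw k0 k3 x)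
        ∧ Fpw lam ε σ k0 k3 x 2 1 = σ * lam * ε ^ 2 * k0)
      ∧ ((1 - lam ^ 2 * ε ^ 2) * k0 ^ 2 - k3 ^ 2 = 0 →
          (Fpw lam ε σ k0 k3 x 3 2) ^ 2 + (Fpw lam ε σ k0 k3 x 1 3) ^ 2
              + (Fpw lam ε σ k0 k3 x 2 1) ^ 2 = ε ^ 2 * k0 ^ 2
          ∧ (Fpw lam ε σ k0 k3 x 0 1) ^ 2 + (Fpw lam ε σ k0 k3 x 0 2) ^ 2
              + (Fpw lam ε σ k0 k3 x 0 3) ^ 2 = ε ^ 2 * k0 ^ 2) := by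
  intro x
  have key := Real.sin_sq_add_cos_sq (φpw k0 k3 x)
  have hσ2 : σ ^ 2 = 1 := by rcases hσ with h | h <;> rw [h] <;> norm_num
  have h01 : Fpw lam ε σ k0 k3 x 0 1 = ε * k0 * Real.cos (φpw k0 k3 x) := by
    simp [Fpw, Fstr, pb, Fin.sum_univ_four, ρκ, γκ, fκ, Apw, pd_zero', pd_sin', pd_cos']
    try ring
  have h02 : Fpw lam ε σ k0 k3 x 0 2 = σ * ε * k0 * Real.sin (φpw k0 k3 x) := by
    simp [Fpw, Fstr, pb, Fin.sum_univ_four, ρκ, γκ, fκ, Apw, pd_zero', pd_sin', pd_cos']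
    try ring
  have h03 : Fpw lam ε σ k0 k3 x 0 3 = 0 := by
    simp [Fpw, Fstr, pb, Fin.sum_univ_four, ρκ, γκ, fκ, Apw, pd_zero', pd_sin', pd_cos']
  have h32 : Fpw lam ε σ k0 k3 x 3 2 = -σ * ε * k3 * Real.sin (φpw k0 k3 x) := by
    simp [Fpw, Fstr, pb, Fin.sum_univ_four, ρκ, γκ, fκ, Apw, pd_zero', pd_sin', pd_cos']
    try ring
  have h13 : Fpw lam ε σ k0 k3 x 1 3 = ε * k3 * Real.cos (φpw k0 k3 x) := by
    simp [Fpw, Fstr, pb, Fin.sum_univ_four, ρκ, γκ, fκ, Apw, pd_zero', pd_sin', pd_cos']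
    try ring
  have h21 : Fpw lam ε σ k0 k3 x 2 1 = σ * lam * ε ^ 2 * k0 := by
    simp [Fpw, Fstr, pb, Fin.sum_univ_four, ρκ, γκ, fκ, Apw, pd_zero', pd_sin', pd_cos']
    try linear_combination (σ * lam * ε ^ 2 * k0) * key
  refine ⟨⟨h01, h02, h03, h32, h13, h21⟩, fun hdisp => ⟨?_, ?_⟩⟩
  · rw [h32, h13, h21]
    linear_combination (ε ^ 2 * k3 ^ 2 * Real.sin (φpw k0 k3 x) ^ 2
        + lam ^ 2 * ε ^ 4 * k0 ^ 2) * hσ2 + ε ^ 2 * k3 ^ 2 * key - ε ^ 2 * hdisp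
  · rw [h01, h02, h03]
    linear_combination ε ^ 2 * k0 ^ 2 * Real.sin (φpw k0 k3 x) ^ 2 * hσ2
        + ε ^ 2 * k0 ^ 2 * key
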